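/- Let F be an antisymmetric 2-tensor (the electromagnetic field strength) on Minkowski space ℝ^{1,3}, and define the energy-momentum tensor T_{μν} = (1/4π)(F_{μρ}F_ν{}^ρ - (1/4)F_{ρσ}F^{ρσ} η_{μν}). Then T satisfies the Dominant Energy Condition: for every future-directed causal vector V, the vector j^μ = -T^μ_ν V^ν is causal (η(j,j) ≤ 0) and satisfies η(j,V) ≤ 0. -/
import Mathlib


open Matrix

/-- The Minkowski metric `η = diag(-1,1,1,1)` on `ℝ⁴`. -/
noncomputable def minkMatrix : Matrix (Fin 4) (Fin 4) ℝ :=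
  Matrix.diagonal ![(-1 : ℝ), 1, 1, 1]

/-- The Minkowski bilinear form. -/
noncomputable def minkBilin (x y : Fin 4 → ℝ) : ℝ :=
  x ⬝ᵥ minkMatrix.mulVec y

/-- The electromagnetic energy-momentum tensor
`T_{μν} = (1/4π)(F_{μρ}F_ν{}^ρ - (1/4)F_{ρσ}F^{ρσ} η_{μν})`, where indices are raised with
`η` (its own inverse): `F_ν{}^ρ = (F·η)_{νρ}`, `F^{ρσ} = (η·F·η)_{ρσ}`. -/
noncomputable def emTensor (F : Matrix (Fin 4) (Fin 4) ℝ) : Matrix (Fin 4) (Fin 4) ℝ :=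
  Matrix.of fun μ ν =>
    (1 / (4 * Real.pi)) *
      ((F * minkMatrix * Fᵀ) μ ν
        - (1 / 4) * (∑ ρ, ∑ σ, F ρ σ * (minkMatrix * F * minkMatrix) ρ σ) * minkMatrix μ ν)

/-- The Minkowski bilinear form, componentwise. -/
lemma minkBilin_eq (x y : Fin 4 → ℝ) :
    minkBilin x y = -(x 0 * y 0) + x 1 * y 1 + x 2 * y 2 + x 3 * y 3 := by
  simp only [minkBilin, minkMatrix, Matrix.mulVec, dotProduct, Fin.sum_univ_four,
    Matrix.diagonal, Matrix.of_apply, Matrix.cons_val', Matrix.cons_val_zero,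
    Matrix.cons_val_one, Matrix.head_cons, Matrix.empty_val', Matrix.cons_val_fin_one,
    Matrix.head_fin_const, Fin.isValue, Matrix.cons_val_two, Matrix.tail_cons,
    Matrix.cons_val_three]
  simp only [show ((0:Fin 4) ≠ 1) from by decide, show ((0:Fin 4) ≠ 2) from by decide,
    show ((0:Fin 4) ≠ 3) from by decide, show ((1:Fin 4) ≠ 0) from by decide,
    show ((1:Fin 4) ≠ 2) from by decide, show ((1:Fin 4) ≠ 3) from by decide,
    show ((2:Fin 4) ≠ 0) from by decide, show ((2:Fin 4) ≠ 1) from by decide,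
    show ((2:Fin 4) ≠ 3) from by decide, show ((3:Fin 4) ≠ 0) from by decide,
    show ((3:Fin 4) ≠ 1) from by decide, show ((3:Fin 4) ≠ 2) from by decide,
    if_true, if_false, ite_true, ite_false]
  ring

/-- The key algebraic identity: `η(j,j) = κ² η(V,V)` for the EM energy-momentum tensor
(with the `1/4π` factor stripped), giving causality of the momentum flux. -/
lemma causal_aux (a b c d e f v0 v1 v2 v3 : ℝ) (hle : v1^2+v2^2+v3^2 ≤ v0^2) :
    -(1/2*(a^2+b^2+c^2+d^2+e^2+f^2)*v0 + (c*e+b*d)*v1 + (c*f-a*d)*v2 + (-b*f-a*e)*v3)^2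
    + (-(c*e+b*d)*v0 + 1/2*(a^2-b^2-c^2-d^2-e^2+f^2)*v1 + (a*b-e*f)*v2 + (a*c+d*f)*v3)^2
    + ((a*d-c*f)*v0 + (a*b-e*f)*v1 + 1/2*(-a^2+b^2-c^2-d^2+e^2-f^2)*v2 + (b*c-d*e)*v3)^2
    + ((a*e+b*f)*v0 + (a*c+d*f)*v1 + (b*c-d*e)*v2 + 1/2*(-a^2-b^2+c^2+d^2-e^2-f^2)*v3)^2
      ≤ 0 := by
  have hid : -(1/2*(a^2+b^2+c^2+d^2+e^2+f^2)*v0 + (c*e+b*d)*v1 + (c*f-a*d)*v2 + (-b*f-a*e)*v3)^2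
    + (-(c*e+b*d)*v0 + 1/2*(a^2-b^2-c^2-d^2-e^2+f^2)*v1 + (a*b-e*f)*v2 + (a*c+d*f)*v3)^2
    + ((a*d-c*f)*v0 + (a*b-e*f)*v1 + 1/2*(-a^2+b^2-c^2-d^2+e^2-f^2)*v2 + (b*c-d*e)*v3)^2
    + ((a*e+b*f)*v0 + (a*c+d*f)*v1 + (b*c-d*e)*v2 + 1/2*(-a^2-b^2+c^2+d^2-e^2-f^2)*v3)^2
    = -(((a*f-b*e+c*d)^2 + ((a^2+b^2+c^2-d^2-e^2-f^2)/2)^2) * (v0^2 - (v1^2+v2^2+v3^2))) := by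
    ring
  rw [hid]
  exact neg_nonpos.mpr (mul_nonneg (by positivity) (by linarith))

/-- Energy density dominates momentum density: the pointwise inequality
`u(v₀² + |v|²) - 2(E×B)·v v₀ - (E·v)² - (B·v)² ≥ 0` for `|v| ≤ v₀`, `v₀ > 0`. -/
lemma em_dec_aux (E1 E2 E3 B1 B2 B3 v0 v1 v2 v3 : ℝ)
    (hle : v1^2 + v2^2 + v3^2 ≤ v0^2) (h0 : 0 < v0) :
    0 ≤ (E1^2+E2^2+E3^2+B1^2+B2^2+B3^2)/2 * (v0^2+v1^2+v2^2+v3^2)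
        - 2*((E2*B3-E3*B2)*v1+(E3*B1-E1*B3)*v2+(E1*B2-E2*B1)*v3)*v0
        - (E1*v1+E2*v2+E3*v3)^2 - (B1*v1+B2*v2+B3*v3)^2 := by
  have hsub : 0 ≤ v0^2 - (v1^2 + v2^2 + v3^2) := by linarith
  have hkey : 0 ≤ 2 * ((E1^2+E2^2+E3^2+B1^2+B2^2+B3^2)/2 * (v0^2+v1^2+v2^2+v3^2)
        - 2*((E2*B3-E3*B2)*v1+(E3*B1-E1*B3)*v2+(E1*B2-E2*B1)*v3)*v0
        - (E1*v1+E2*v2+E3*v3)^2 - (B1*v1+B2*v2+B3*v3)^2) * v0^2 := by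
    have hid : 2 * ((E1^2+E2^2+E3^2+B1^2+B2^2+B3^2)/2 * (v0^2+v1^2+v2^2+v3^2)
        - 2*((E2*B3-E3*B2)*v1+(E3*B1-E1*B3)*v2+(E1*B2-E2*B1)*v3)*v0
        - (E1*v1+E2*v2+E3*v3)^2 - (B1*v1+B2*v2+B3*v3)^2) * v0^2
        = (v0^2 - (v1^2 + v2^2 + v3^2)) *
            ((v0*E1 + (v2*B3 - v3*B2))^2 + (v0*E2 + (v3*B1 - v1*B3))^2
              + (v0*E3 + (v1*B2 - v2*B1))^2 + (v0*B1 - (v2*E3 - v3*E2))^2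
              + (v0*B2 - (v3*E1 - v1*E3))^2 + (v0*B3 - (v1*E2 - v2*E1))^2)
          + (v2*(v0*E3 + (v1*B2 - v2*B1)) - v3*(v0*E2 + (v3*B1 - v1*B3)))^2
          + (v3*(v0*E1 + (v2*B3 - v3*B2)) - v1*(v0*E3 + (v1*B2 - v2*B1)))^2
          + (v1*(v0*E2 + (v3*B1 - v1*B3)) - v2*(v0*E1 + (v2*B3 - v3*B2)))^2
          + (v2*(v0*B3 - (v1*E2 - v2*E1)) - v3*(v0*B2 - (v3*E1 - v1*E3)))^2
          + (v3*(v0*B1 - (v2*E3 - v3*E2)) - v1*(v0*B3 - (v1*E2 - v2*E1)))^2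
          + (v1*(v0*B2 - (v3*E1 - v1*E3)) - v2*(v0*B1 - (v2*E3 - v3*E2)))^2 := by ring
    rw [hid]
    positivity
  nlinarith [hkey, mul_pos h0 h0]

/-- The flux `-T(V,·)` is past-directed: `η(j,V) ≤ 0` (with `1/4π` stripped). -/
lemma dec_component_aux (a b c d e f v0 v1 v2 v3 : ℝ)
    (hle : v1^2 + v2^2 + v3^2 ≤ v0^2) (h0 : 0 < v0) :
    -((1/2*(a^2+b^2+c^2+d^2+e^2+f^2)*v0 + (c*e+b*d)*v1 + (c*f-a*d)*v2 + (-b*f-a*e)*v3) * v0)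
    + (-(c*e+b*d)*v0 + 1/2*(a^2-b^2-c^2-d^2-e^2+f^2)*v1 + (a*b-e*f)*v2 + (a*c+d*f)*v3) * v1
    + ((a*d-c*f)*v0 + (a*b-e*f)*v1 + 1/2*(-a^2+b^2-c^2-d^2+e^2-f^2)*v2 + (b*c-d*e)*v3) * v2
    + ((a*e+b*f)*v0 + (a*c+d*f)*v1 + (b*c-d*e)*v2 + 1/2*(-a^2-b^2+c^2+d^2-e^2-f^2)*v3) * v3
      ≤ 0 := by
  nlinarith [em_dec_aux (-a) (-b) (-c) f (-e) d v0 v1 v2 v3 hle h0]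

set_option maxHeartbeats 1000000 in
/-- The energy-momentum tensor of an antisymmetric field strength `F` satisfies
the Dominant Energy Condition: for every future-directed causal `V`, the vector
`j^μ = -T^μ_ν V^ν` is causal and satisfies `η(j,V) ≤ 0`. -/
theorem stmt_2 (F : Matrix (Fin 4) (Fin 4) ℝ) (hF : Fᵀ = -F) :
    ∀ V : Fin 4 → ℝ, minkBilin V V ≤ 0 → 0 < V 0 →
      minkBilin (fun μ => -((minkMatrix * emTensor F).mulVec V μ))
          (fun μ => -((minkMatrix * emTensor F).mulVec V μ)) ≤ 0 ∧
      minkBilin (fun μ => -((minkMatrix * emTensor F).mulVec V μ)) V ≤ 0 := by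
  have hA : ∀ i j, F j i = -F i j := fun i j => by
    have := congrFun (congrFun hF i) j
    simpa [Matrix.transpose_apply] using this
  have h00 : F 0 0 = 0 := by linarith [hA 0 0]
  have h11 : F 1 1 = 0 := by linarith [hA 1 1]
  have h22 : F 2 2 = 0 := by linarith [hA 2 2]
  have h33 : F 3 3 = 0 := by linarith [hA 3 3]
  have h10 : F 1 0 = -F 0 1 := hA 0 1
  have h20 : F 2 0 = -F 0 2 := hA 0 2
  have h30 : F 3 0 = -F 0 3 := hA 0 3
  have h21 : F 2 1 = -F 1 2 := hA 1 2
  have h31 : F 3 1 = -F 1 3 := hA 1 3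
  have h32 : F 3 2 = -F 2 3 := hA 2 3
  intro V hV h0
  rw [minkBilin_eq] at hV
  have hVle : V 1 ^ 2 + V 2 ^ 2 + V 3 ^ 2 ≤ V 0 ^ 2 := by nlinarith [hV]
  -- abbreviations
  set a := F 0 1 with ha
  set b := F 0 2 with hb
  set c := F 0 3 with hc
  set d := F 1 2 with hd
  set e := F 1 3 with he
  set f := F 2 3 with hf'
  -- component formulas for  -(η T V)_μ = (1/4π) g_μ
  have c0 : -((minkMatrix * emTensor F).mulVec V 0) = (1/(4*Real.pi)) *
      (1/2*(a^2+b^2+c^2+d^2+e^2+f^2)*V 0 + (c*e+b*d)*V 1 + (c*f-a*d)*V 2 + (-b*f-a*e)*V 3) := by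
    simp only [minkMatrix, emTensor, Matrix.mul_apply, Matrix.mulVec, dotProduct,
      Fin.sum_univ_four, Matrix.diagonal, Matrix.of_apply, Matrix.transpose_apply,
      Matrix.cons_val', Matrix.cons_val_zero, Matrix.cons_val_one, Matrix.head_cons,
      Matrix.empty_val', Matrix.cons_val_fin_one, Matrix.head_fin_const, Fin.isValue,
      Matrix.cons_val_two, Matrix.tail_cons, Matrix.cons_val_three]
    simp only [Fin.isValue, show ((0:Fin 4) ≠ 1) from by decide,
      show ((0:Fin 4) ≠ 2) from by decide, show ((0:Fin 4) ≠ 3) from by decide,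
      show ((1:Fin 4) ≠ 0) from by decide, show ((1:Fin 4) ≠ 2) from by decide,
      show ((1:Fin 4) ≠ 3) from by decide, show ((2:Fin 4) ≠ 0) from by decide,
      show ((2:Fin 4) ≠ 1) from by decide, show ((2:Fin 4) ≠ 3) from by decide,
      show ((3:Fin 4) ≠ 0) from by decide, show ((3:Fin 4) ≠ 1) from by decide,
      show ((3:Fin 4) ≠ 2) from by decide, if_true, if_false, ite_true, ite_false]
    simp only [h00, h11, h22, h33, h10, h20, h30, h21, h31, h32, ← ha, ← hb, ← hc, ← hd,
      ← he, ← hf']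
    ring
  have c1 : -((minkMatrix * emTensor F).mulVec V 1) = (1/(4*Real.pi)) *
      (-(c*e+b*d)*V 0 + 1/2*(a^2-b^2-c^2-d^2-e^2+f^2)*V 1 + (a*b-e*f)*V 2 + (a*c+d*f)*V 3) := by
    simp only [minkMatrix, emTensor, Matrix.mul_apply, Matrix.mulVec, dotProduct,
      Fin.sum_univ_four, Matrix.diagonal, Matrix.of_apply, Matrix.transpose_apply,
      Matrix.cons_val', Matrix.cons_val_zero, Matrix.cons_val_one, Matrix.head_cons,
      Matrix.empty_val', Matrix.cons_val_fin_one, Matrix.head_fin_const, Fin.isValue,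
      Matrix.cons_val_two, Matrix.tail_cons, Matrix.cons_val_three]
    simp only [Fin.isValue, show ((0:Fin 4) ≠ 1) from by decide,
      show ((0:Fin 4) ≠ 2) from by decide, show ((0:Fin 4) ≠ 3) from by decide,
      show ((1:Fin 4) ≠ 0) from by decide, show ((1:Fin 4) ≠ 2) from by decide,
      show ((1:Fin 4) ≠ 3) from by decide, show ((2:Fin 4) ≠ 0) from by decide,
      show ((2:Fin 4) ≠ 1) from by decide, show ((2:Fin 4) ≠ 3) from by decide,
      show ((3:Fin 4) ≠ 0) from by decide, show ((3:Fin 4) ≠ 1) from by decide,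
      show ((3:Fin 4) ≠ 2) from by decide, if_true, if_false, ite_true, ite_false]
    simp only [h00, h11, h22, h33, h10, h20, h30, h21, h31, h32, ← ha, ← hb, ← hc, ← hd,
      ← he, ← hf']
    ring
  have c2 : -((minkMatrix * emTensor F).mulVec V 2) = (1/(4*Real.pi)) *
      ((a*d-c*f)*V 0 + (a*b-e*f)*V 1 + 1/2*(-a^2+b^2-c^2-d^2+e^2-f^2)*V 2 + (b*c-d*e)*V 3) := by
    simp only [minkMatrix, emTensor, Matrix.mul_apply, Matrix.mulVec, dotProduct,
      Fin.sum_univ_four, Matrix.diagonal, Matrix.of_apply, Matrix.transpose_apply,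
      Matrix.cons_val', Matrix.cons_val_zero, Matrix.cons_val_one, Matrix.head_cons,
      Matrix.empty_val', Matrix.cons_val_fin_one, Matrix.head_fin_const, Fin.isValue,
      Matrix.cons_val_two, Matrix.tail_cons, Matrix.cons_val_three]
    simp only [Fin.isValue, show ((0:Fin 4) ≠ 1) from by decide,
      show ((0:Fin 4) ≠ 2) from by decide, show ((0:Fin 4) ≠ 3) from by decide,
      show ((1:Fin 4) ≠ 0) from by decide, show ((1:Fin 4) ≠ 2) from by decide,
      show ((1:Fin 4) ≠ 3) from by decide, show ((2:Fin 4) ≠ 0) from by decide,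
      show ((2:Fin 4) ≠ 1) from by decide, show ((2:Fin 4) ≠ 3) from by decide,
      show ((3:Fin 4) ≠ 0) from by decide, show ((3:Fin 4) ≠ 1) from by decide,
      show ((3:Fin 4) ≠ 2) from by decide, if_true, if_false, ite_true, ite_false]
    simp only [h00, h11, h22, h33, h10, h20, h30, h21, h31, h32, ← ha, ← hb, ← hc, ← hd,
      ← he, ← hf']
    ring
  have c3 : -((minkMatrix * emTensor F).mulVec V 3) = (1/(4*Real.pi)) *
      ((a*e+b*f)*V 0 + (a*c+d*f)*V 1 + (b*c-d*e)*V 2 + 1/2*(-a^2-b^2+c^2+d^2-e^2-f^2)*V 3) := by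
    simp only [minkMatrix, emTensor, Matrix.mul_apply, Matrix.mulVec, dotProduct,
      Fin.sum_univ_four, Matrix.diagonal, Matrix.of_apply, Matrix.transpose_apply,
      Matrix.cons_val', Matrix.cons_val_zero, Matrix.cons_val_one, Matrix.head_cons,
      Matrix.empty_val', Matrix.cons_val_fin_one, Matrix.head_fin_const, Fin.isValue,
      Matrix.cons_val_two, Matrix.tail_cons, Matrix.cons_val_three]
    simp only [Fin.isValue, show ((0:Fin 4) ≠ 1) from by decide,
      show ((0:Fin 4) ≠ 2) from by decide, show ((0:Fin 4) ≠ 3) from by decide,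
      show ((1:Fin 4) ≠ 0) from by decide, show ((1:Fin 4) ≠ 2) from by decide,
      show ((1:Fin 4) ≠ 3) from by decide, show ((2:Fin 4) ≠ 0) from by decide,
      show ((2:Fin 4) ≠ 1) from by decide, show ((2:Fin 4) ≠ 3) from by decide,
      show ((3:Fin 4) ≠ 0) from by decide, show ((3:Fin 4) ≠ 1) from by decide,
      show ((3:Fin 4) ≠ 2) from by decide, if_true, if_false, ite_true, ite_false]
    simp only [h00, h11, h22, h33, h10, h20, h30, h21, h31, h32, ← ha, ← hb, ← hc, ← hd,
      ← he, ← hf']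
    ring
  constructor
  · rw [minkBilin_eq]
    rw [c0, c1, c2, c3]
    have hfinal := mul_nonpos_of_nonneg_of_nonpos (sq_nonneg (1/(4*Real.pi)))
      (causal_aux a b c d e f (V 0) (V 1) (V 2) (V 3) hVle)
    refine le_trans (le_of_eq ?_) hfinal
    ring
  · rw [minkBilin_eq]
    rw [c0, c1, c2, c3]
    have hfinal := mul_nonpos_of_nonneg_of_nonpos
      (by positivity : (0:ℝ) ≤ 1/(4*Real.pi))
      (dec_component_aux a b c d e f (V 0) (V 1) (V 2) (V 3) hVle h0)
    refine le_trans (le_of_eq ?_) hfinal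
    ring
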